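/- Define B(s) = 2 + (1-s)·(-2ψ(1-2s) - 2ψ(1+2s) + 3ψ(1-s) + 3ψ(1+s) - ψ(3/2 - s/2) - ψ(1/2 + s/2)). Then for all s ∈ [0, 1/38], 1 < B(s) < 3. -/

import Mathlib

/-!
Since `ψ (x + 1) = ψ x + 1 / x` and `ψ` is monotone (log-convexity of `Γ`),
`ψ (x + n) - ψ (y + n) → 0`, which gives `ψ x - ψ y = ∑ₖ (1 / (y + k) - 1 / (x + k))`. Hence the
second difference `g_a(t) = 2 ψ a - ψ (a - t) - ψ (a + t)` is the series of positive terms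
`2 t² / ((a + k) ((a + k)² - t²))`, and for `a ≥ 1`, comparing with `∑ 1 / (k + 1)² = π² / 6`,
`0 ≤ g_a(t) ≤ π² t² / (3 (1 - t²)) ≤ 1 / 100` on the range needed.

The bracket in `B s` is `2 g₁(2s) - 3 g₁(s) + 2 ψ 1 - ψ (3/2 - s/2) - ψ (1/2 + s/2)`. For the
lower bound, `ψ (3/2 - s/2) ≤ ψ (3/2)` and `ψ (1/2 + s/2) ≤ ψ 1`; for the upper bound,
`ψ (1/2 + s/2) = ψ (3/2 + s/2) - 2 / (1 + s)` turns the last two terms into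
`g_{3/2}(s/2) - 2 ψ (3/2) + 2 / (1 + s)`. With `ψ 1 = -γ` and `ψ (3/2) = 2 - γ - 2 log 2` the
bracket lies in `[-0.65, 0.81]`.
-/

noncomputable def digamma (x : ℝ) : ℝ := deriv (fun y => Real.log (Real.Gamma y)) x

noncomputable def B (s : ℝ) : ℝ :=
  2 + (1 - s) * (-2 * digamma (1 - 2 * s) - 2 * digamma (1 + 2 * s) +
    3 * digamma (1 - s) + 3 * digamma (1 + s) -
    digamma (3 / 2 - s / 2) - digamma (1 / 2 + s / 2))

open Real Filter Topology Finset

lemma hasDerivAt_log_Gamma {x : ℝ} (hx : 0 < x) :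
    HasDerivAt (fun y => log (Gamma y)) (digamma x) x := by
  have hΓ : DifferentiableAt ℝ Gamma x :=
    differentiableAt_Gamma fun m => ((neg_nonpos.mpr m.cast_nonneg).trans_lt hx).ne'
  exact (hΓ.log (Gamma_pos_of_pos hx).ne').hasDerivAt

lemma digamma_eq_of_hasDerivAt_Gamma {x d : ℝ} (hΓ : HasDerivAt Gamma d x) (hx : Gamma x ≠ 0) :
    digamma x = d / Gamma x :=
  (hΓ.log hx).deriv

lemma digamma_one : digamma 1 = -eulerMascheroniConstant := by
  rw [digamma_eq_of_hasDerivAt_Gamma hasDerivAt_Gamma_one (by simp)]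
  simp

lemma digamma_one_half : digamma (1 / 2) = -eulerMascheroniConstant - 2 * log 2 := by
  rw [digamma_eq_of_hasDerivAt_Gamma hasDerivAt_Gamma_one_half (Gamma_pos_of_pos one_half_pos).ne',
    Gamma_one_half_eq]
  field_simp
  ring

lemma digamma_monotoneOn : MonotoneOn digamma (Set.Ioi 0) :=
  convexOn_log_Gamma.monotoneOn_deriv fun _ hx => (hasDerivAt_log_Gamma hx).differentiableAt

lemma digamma_add_one {x : ℝ} (hx : 0 < x) : digamma (x + 1) = digamma x + 1 / x := by
  have hshift : HasDerivAt (fun y => log (Gamma (y + 1))) (digamma (x + 1)) x := by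
    simpa using (hasDerivAt_log_Gamma (by linarith : 0 < x + 1)).comp_add_const x 1
  have hsplit : HasDerivAt (fun y => log y + log (Gamma y)) (x⁻¹ + digamma x) x :=
    (hasDerivAt_log hx.ne').add (hasDerivAt_log_Gamma hx)
  have heq : (fun y => log (Gamma (y + 1))) =ᶠ[𝓝 x] fun y => log y + log (Gamma y) := by
    filter_upwards [eventually_gt_nhds hx] with y hy
    rw [Gamma_add_one hy.ne', log_mul hy.ne' (Gamma_pos_of_pos hy).ne']
  rw [(hshift.congr_of_eventuallyEq heq.symm).unique hsplit, add_comm, one_div]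

lemma digamma_three_halves : digamma (3 / 2) = 2 - eulerMascheroniConstant - 2 * log 2 := by
  rw [show (3 : ℝ) / 2 = 1 / 2 + 1 by norm_num, digamma_add_one one_half_pos, digamma_one_half]
  ring

lemma digamma_add_nat {x : ℝ} (hx : 0 < x) (n : ℕ) :
    digamma (x + n) = digamma x + ∑ k ∈ range n, 1 / (x + k) := by
  induction n with
  | zero => simp
  | succ n ih =>
    rw [Nat.cast_succ, ← add_assoc, digamma_add_one (by positivity), ih, sum_range_succ, add_assoc]

lemma digamma_sub_digamma_le {x y : ℝ} (hx : 0 < x) (hy : 0 < y) {m : ℕ} (h : x ≤ y + m) :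
    digamma x - digamma y ≤ m / y := by
  have hmono : digamma x ≤ digamma (y + m) :=
    digamma_monotoneOn hx (by simp only [Set.mem_Ioi]; positivity) h
  have hsum : ∑ k ∈ range m, 1 / (y + k) ≤ m / y := by
    calc ∑ k ∈ range m, 1 / (y + k) ≤ ∑ _k ∈ range m, 1 / y :=
          sum_le_sum fun k _ => one_div_le_one_div_of_le hy (by simp)
      _ = m / y := by simp [div_eq_mul_inv]
  linarith [digamma_add_nat hy m]

lemma tendsto_digamma_add_nat_sub {x y : ℝ} (hx : 0 < x) (hy : 0 < y) :
    Tendsto (fun n : ℕ => digamma (x + n) - digamma (y + n)) atTop (𝓝 0) := by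
  set m := ⌈x + y⌉₊
  have hm : x + y ≤ m := Nat.le_ceil _
  have hdecay (z : ℝ) : Tendsto (fun n : ℕ => (m : ℝ) / (z + n)) atTop (𝓝 0) :=
    tendsto_const_nhds.div_atTop (tendsto_atTop_add_const_left _ z tendsto_natCast_atTop_atTop)
  refine tendsto_of_tendsto_of_tendsto_of_le_of_le (by simpa using (hdecay x).neg) (hdecay y)
    (fun n => ?_) (fun n => ?_)
  · have := digamma_sub_digamma_le (x := y + n) (y := x + n) (m := m) (by positivity)
      (by positivity) (by linarith)
    linarith
  · exact digamma_sub_digamma_le (by positivity) (by positivity) (by linarith)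

theorem hasSum_digamma_sub {x y : ℝ} (hx : 0 < x) (hy : 0 < y) :
    HasSum (fun k : ℕ => 1 / (y + k) - 1 / (x + k)) (digamma x - digamma y) := by
  wlog hyx : y ≤ x generalizing x y with H
  · simpa only [neg_sub] using (H hy hx (le_of_not_ge hyx)).neg
  have hpartial (n : ℕ) : ∑ k ∈ range n, (1 / (y + k) - 1 / (x + k)) =
      digamma x - digamma y - (digamma (x + n) - digamma (y + n)) := by
    rw [sum_sub_distrib, digamma_add_nat hx, digamma_add_nat hy]
    ring
  refine (hasSum_iff_tendsto_nat_of_nonneg (fun k => ?_) _).mpr ?_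
  · exact sub_nonneg.mpr (one_div_le_one_div_of_le (by positivity) (by linarith))
  · simp only [hpartial]
    simpa using tendsto_const_nhds.sub (tendsto_digamma_add_nat_sub hx hy)

theorem hasSum_two_mul_digamma_sub {a t : ℝ} (ht : |t| < a) :
    HasSum (fun k : ℕ => 2 * t ^ 2 / ((a + k) * ((a + k) ^ 2 - t ^ 2)))
      (2 * digamma a - digamma (a - t) - digamma (a + t)) := by
  obtain ⟨hlo, hhi⟩ := abs_lt.mp ht
  have ha : 0 < a := (abs_nonneg t).trans_lt ht
  convert (hasSum_digamma_sub ha (by linarith : 0 < a - t)).add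
    (hasSum_digamma_sub ha (by linarith : 0 < a + t)) using 1
  · ext k
    have hk : (0 : ℝ) ≤ k := k.cast_nonneg
    have h1 : a - t + k ≠ 0 := by linarith
    have h2 : a + t + k ≠ 0 := by linarith
    have h3 : a + k ≠ 0 := by linarith
    have h4 : (a + k) ^ 2 - t ^ 2 ≠ 0 := by nlinarith
    field_simp
    ring
  · ring

lemma digamma_sub_add_digamma_add_le {a t : ℝ} (ht : |t| < a) :
    digamma (a - t) + digamma (a + t) ≤ 2 * digamma a := by
  obtain ⟨hlo, hhi⟩ := abs_lt.mp ht
  have := (hasSum_two_mul_digamma_sub ht).nonneg fun k => by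
    have hk : (0 : ℝ) ≤ k := k.cast_nonneg
    have : 0 < (a + k) * ((a + k) ^ 2 - t ^ 2) := by
      apply mul_pos <;> nlinarith
    positivity
  linarith

lemma two_mul_digamma_sub_le {a t : ℝ} (ha : 1 ≤ a) (ht : |t| < 1) :
    2 * digamma a - digamma (a - t) - digamma (a + t) ≤ π ^ 2 * t ^ 2 / (3 * (1 - t ^ 2)) := by
  have ht2 : 0 < 1 - t ^ 2 := by nlinarith [sq_abs t, abs_nonneg t]
  have hzeta : HasSum (fun k : ℕ => 1 / ((k : ℝ) + 1) ^ 2) (π ^ 2 / 6) := by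
    simpa using (hasSum_nat_add_iff' 1).mpr hasSum_zeta_two
  have hterm (k : ℕ) : 2 * t ^ 2 / ((a + k) * ((a + k) ^ 2 - t ^ 2)) ≤
      2 * t ^ 2 / (1 - t ^ 2) * (1 / ((k : ℝ) + 1) ^ 2) := by
    have hq : (1 : ℝ) ≤ k + 1 := by simp
    have hden : (1 - t ^ 2) * (k + 1) ^ 2 ≤ (a + k) * ((a + k) ^ 2 - t ^ 2) := by
      have hqp : (k + 1 : ℝ) ≤ a + k := by linarith
      nlinarith [mul_nonneg (sub_nonneg.mpr hqp)
          (by nlinarith : (0 : ℝ) ≤ (a + k) ^ 2 + (a + k) * (k + 1) + (k + 1) ^ 2 - t ^ 2),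
        mul_nonneg (sub_nonneg.mpr hq) (by positivity : (0 : ℝ) ≤ (k + 1) ^ 2 + (k + 1) * t ^ 2)]
    calc 2 * t ^ 2 / ((a + k) * ((a + k) ^ 2 - t ^ 2))
        ≤ 2 * t ^ 2 / ((1 - t ^ 2) * (k + 1) ^ 2) :=
          div_le_div_of_nonneg_left (by positivity) (by positivity) hden
      _ = 2 * t ^ 2 / (1 - t ^ 2) * (1 / ((k : ℝ) + 1) ^ 2) := by
          field_simp
  calc 2 * digamma a - digamma (a - t) - digamma (a + t)
      ≤ 2 * t ^ 2 / (1 - t ^ 2) * (π ^ 2 / 6) :=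
        hasSum_le hterm (hasSum_two_mul_digamma_sub (by linarith))
          (hzeta.mul_left (2 * t ^ 2 / (1 - t ^ 2)))
    _ = π ^ 2 * t ^ 2 / (3 * (1 - t ^ 2)) := by
        field_simp
        ring

lemma two_mul_digamma_sub_le_one_div_hundred {a t : ℝ} (ha : 1 ≤ a) (h0 : 0 ≤ t)
    (h1 : t ≤ 1 / 19) : 2 * digamma a - digamma (a - t) - digamma (a + t) ≤ 1 / 100 := by
  refine (two_mul_digamma_sub_le ha (by rw [abs_lt]; constructor <;> linarith)).trans ?_
  have ht2 : t ^ 2 ≤ 1 / 361 := by nlinarith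
  rw [div_le_iff₀ (by nlinarith)]
  nlinarith [pi_lt_d2, pi_pos]

lemma one_lt_B {s : ℝ} (h0 : 0 ≤ s) (h1 : s ≤ 1 / 38) : 1 < B s := by
  have hsmall := two_mul_digamma_sub_le_one_div_hundred le_rfl h0 (by linarith)
  have hconcave := digamma_sub_add_digamma_add_le (a := 1) (t := 2 * s)
    (by rw [abs_lt]; constructor <;> linarith)
  have hmono₁ : digamma (3 / 2 - s / 2) ≤ digamma (3 / 2) :=
    digamma_monotoneOn (by simp only [Set.mem_Ioi]; linarith) (by norm_num) (by linarith)
  have hmono₂ : digamma (1 / 2 + s / 2) ≤ digamma 1 :=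
    digamma_monotoneOn (by simp only [Set.mem_Ioi]; linarith) (by norm_num) (by linarith)
  have hE : -13 / 20 ≤ -2 * digamma (1 - 2 * s) - 2 * digamma (1 + 2 * s) +
      3 * digamma (1 - s) + 3 * digamma (1 + s) -
      digamma (3 / 2 - s / 2) - digamma (1 / 2 + s / 2) := by
    linarith [digamma_one, digamma_three_halves, log_two_gt_d9]
  unfold B
  calc 1 < 2 + (1 - s) * (-13 / 20) := by linarith
    _ ≤ _ := by gcongr; linarith

lemma B_lt_three {s : ℝ} (h0 : 0 ≤ s) (h1 : s ≤ 1 / 38) : B s < 3 := by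
  have hsmall₁ := two_mul_digamma_sub_le_one_div_hundred (a := 1) (t := 2 * s) le_rfl
    (by linarith) (by linarith)
  have hsmall₂ := two_mul_digamma_sub_le_one_div_hundred (a := 3 / 2) (t := s / 2) (by norm_num)
    (by linarith) (by linarith)
  have hconcave := digamma_sub_add_digamma_add_le (a := 1) (t := s)
    (by rw [abs_lt]; constructor <;> linarith)
  have hrec : digamma (3 / 2 + s / 2) = digamma (1 / 2 + s / 2) + 2 / (1 + s) := by
    rw [show (3 : ℝ) / 2 + s / 2 = 1 / 2 + s / 2 + 1 by ring, digamma_add_one (by linarith)]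
    congr 1
    field_simp
  have hrec_le : 2 / (1 + s) ≤ 2 := by
    rw [div_le_iff₀ (by linarith)]
    linarith
  have hE : -2 * digamma (1 - 2 * s) - 2 * digamma (1 + 2 * s) +
      3 * digamma (1 - s) + 3 * digamma (1 + s) -
      digamma (3 / 2 - s / 2) - digamma (1 / 2 + s / 2) ≤ 81 / 100 := by
    linarith [digamma_one, digamma_three_halves, log_two_lt_d9]
  unfold B
  calc _ ≤ 2 + (1 - s) * (81 / 100) := by gcongr; linarith
    _ < 3 := by linarith

theorem B_bounds : ∀ s ∈ Set.Icc (0 : ℝ) (1 / 38), 1 < B s ∧ B s < 3 :=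
  fun _ ⟨h0, h1⟩ => ⟨one_lt_B h0 h1, B_lt_three h0 h1⟩
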